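/- Let f, l : [a,b] → ℝ be continuous with m ≤ f(x) ≤ M for all x, and let u : [a,b] → ℝ be of bounded variation with ∫_a^b l(x) du(x) = 0. Then |∫_a^b f(x) l(x) du(x)| ≤ (1/2)(M − m) · ‖l‖_{∞,[a,b]} · V_a^b(u). -/

import Mathlib

open MeasureTheory Set

/-- `I` is the Riemann–Stieltjes integral of `f` with respect to `u` on `[a,b]`:
Riemann–Stieltjes sums over tagged partitions with small mesh approximate `I`. -/
def IsRSIntegralOn (f u : ℝ → ℝ) (a b I : ℝ) : Prop :=
  ∀ ε > (0 : ℝ), ∃ δ > (0 : ℝ), ∀ (n : ℕ) (t : Fin (n + 1) → ℝ) (ξ : Fin n → ℝ),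
    t 0 = a → t (Fin.last n) = b → Monotone t →
    (∀ i : Fin n, t i.castSucc ≤ ξ i ∧ ξ i ≤ t i.succ ∧ t i.succ - t i.castSucc < δ) →
    |(∑ i : Fin n, f (ξ i) * (u (t i.succ) - u (t i.castSucc))) - I| < ε

theorem median_principle_weighted_stieltjes
    (a b m M I J : ℝ) (f l u : ℝ → ℝ) (hab : a < b)
    (hf : ContinuousOn f (Icc a b))
    (hl : ContinuousOn l (Icc a b))
    (hbound : ∀ x ∈ Icc a b, m ≤ f x ∧ f x ≤ M)
    (hu : BoundedVariationOn u (Icc a b))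
    (hJ : IsRSIntegralOn l u a b J) (hJ0 : J = 0)
    (hI : IsRSIntegralOn (fun x => f x * l x) u a b I) :
    |I| ≤ (1 / 2) * (M - m) * sSup ((fun x => |l x|) '' Icc a b) *
      (eVariationOn u (Icc a b)).toReal := by
  subst hJ0
  set L := sSup ((fun x => |l x|) '' Icc a b) with hLdef
  set V := (eVariationOn u (Icc a b)).toReal with hVdef
  set c : ℝ := (m + M) / 2 with hcdef
  have hamem : a ∈ Icc a b := left_mem_Icc.2 hab.le
  have hbdd : BddAbove ((fun x => |l x|) '' Icc a b) :=
    (isCompact_Icc.image_of_continuousOn hl.abs).bddAbove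
  have hlle : ∀ x ∈ Icc a b, |l x| ≤ L := fun x hx => le_csSup hbdd ⟨x, hx, rfl⟩
  have hL0 : (0 : ℝ) ≤ L := le_trans (abs_nonneg _) (hlle a hamem)
  have hmM : m ≤ M := le_trans (hbound a hamem).1 (hbound a hamem).2
  have hV0 : (0 : ℝ) ≤ V := ENNReal.toReal_nonneg
  have hfc : ∀ x ∈ Icc a b, |f x - c| ≤ (M - m) / 2 := by
    intro x hx
    have h1 := (hbound x hx).1
    have h2 := (hbound x hx).2
    rw [abs_le]
    constructor <;> [skip; skip] <;> simp only [hcdef] <;> linarith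
  -- Key bound on the modified Riemann–Stieltjes sums
  have key : ∀ (n : ℕ) (t : Fin (n + 1) → ℝ) (ξ : Fin n → ℝ),
      t 0 = a → t (Fin.last n) = b → Monotone t →
      (∀ i : Fin n, t i.castSucc ≤ ξ i ∧ ξ i ≤ t i.succ) →
      |∑ i : Fin n, (f (ξ i) - c) * l (ξ i) * (u (t i.succ) - u (t i.castSucc))| ≤
        (M - m) / 2 * L * V := by
    intro n t ξ ht0 htl htm hξ
    have htmem : ∀ j : Fin (n + 1), t j ∈ Icc a b := by
      intro j
      constructor
      · rw [← ht0]; exact htm (Fin.zero_le j)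
      · rw [← htl]; exact htm (Fin.le_last j)
    have hξmem : ∀ i : Fin n, ξ i ∈ Icc a b := by
      intro i
      constructor
      · exact le_trans (htmem i.castSucc).1 (hξ i).1
      · exact le_trans (hξ i).2 (htmem i.succ).2
    -- variation sum bound
    have hvar : ∑ i : Fin n, |u (t i.succ) - u (t i.castSucc)| ≤ V := by
      set t' : ℕ → ℝ := fun i => t ⟨min i n, by omega⟩ with ht'def
      have ht'mono : Monotone t' := by
        intro i j hij
        exact htm (by simp [Fin.le_def]; omega)
      have ht'mem : ∀ i, t' i ∈ Icc a b := fun i => htmem _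
      have hsum := eVariationOn.sum_le (f := u) (n := n) ht'mono ht'mem
      have heq : ∑ i : Fin n, |u (t i.succ) - u (t i.castSucc)| =
          ∑ i ∈ Finset.range n, |u (t' (i + 1)) - u (t' i)| := by
        rw [Finset.sum_range fun i => |u (t' (i + 1)) - u (t' i)|]
        apply Finset.sum_congr rfl
        intro i _
        have e1 : t' (↑i + 1) = t i.succ := by
          simp only [ht'def]; congr 1; apply Fin.ext; simp
        have e2 : t' (↑i : ℕ) = t i.castSucc := by
          simp only [ht'def]; congr 1; apply Fin.ext; simp
        rw [e1, e2]
      have hofReal : ENNReal.ofReal (∑ i ∈ Finset.range n, |u (t' (i + 1)) - u (t' i)|)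
          ≤ eVariationOn u (Icc a b) := by
        rw [ENNReal.ofReal_sum_of_nonneg (fun i _ => abs_nonneg _)]
        refine le_trans (le_of_eq ?_) hsum
        apply Finset.sum_congr rfl
        intro i _
        rw [edist_dist, Real.dist_eq]
      have := ENNReal.toReal_mono hu hofReal
      rw [ENNReal.toReal_ofReal (Finset.sum_nonneg fun i _ => abs_nonneg _)] at this
      rw [heq]
      exact this
    calc |∑ i : Fin n, (f (ξ i) - c) * l (ξ i) * (u (t i.succ) - u (t i.castSucc))|
        ≤ ∑ i : Fin n, |(f (ξ i) - c) * l (ξ i) * (u (t i.succ) - u (t i.castSucc))| :=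
          Finset.abs_sum_le_sum_abs _ _
      _ ≤ ∑ i : Fin n, (M - m) / 2 * L * |u (t i.succ) - u (t i.castSucc)| := by
          apply Finset.sum_le_sum
          intro i _
          rw [abs_mul, abs_mul]
          have h1 := hfc _ (hξmem i)
          have h2 := hlle _ (hξmem i)
          have h3 : (0:ℝ) ≤ |u (t i.succ) - u (t i.castSucc)| := abs_nonneg _
          have h4 : (0:ℝ) ≤ |l (ξ i)| := abs_nonneg _
          exact mul_le_mul_of_nonneg_right (mul_le_mul h1 h2 h4 (by linarith)) h3
      _ = (M - m) / 2 * L * ∑ i : Fin n, |u (t i.succ) - u (t i.castSucc)| := by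
          rw [Finset.mul_sum]
      _ ≤ (M - m) / 2 * L * V := by
          exact mul_le_mul_of_nonneg_left hvar (mul_nonneg (by linarith) hL0)
  -- Now the ε-argument
  apply le_of_forall_pos_le_add
  intro ε hε
  obtain ⟨δ₁, hδ₁, h₁⟩ := hI (ε / 2) (by positivity)
  have hc1 : (0:ℝ) < 2 * (|c| + 1) := by have := abs_nonneg c; linarith
  obtain ⟨δ₂, hδ₂, h₂⟩ := hJ (ε / (2 * (|c| + 1))) (div_pos hε hc1)
  set δ : ℝ := min δ₁ δ₂ with hδdef
  have hδ : 0 < δ := lt_min hδ₁ hδ₂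
  obtain ⟨n, hn⟩ := exists_nat_gt ((b - a) / δ)
  have hn0 : 0 < (n : ℝ) := lt_trans (div_pos (by linarith) hδ) hn
  set h : ℝ := (b - a) / n with hhdef
  have hh0 : 0 < h := div_pos (by linarith) hn0
  have hhδ : h < δ := by
    rw [hhdef, div_lt_iff₀ hn0]
    calc b - a = ((b - a) / δ) * δ := by field_simp
      _ < n * δ := by apply mul_lt_mul_of_pos_right hn hδ
      _ = δ * n := by ring
  set t : Fin (n + 1) → ℝ := fun i => a + i * h with htdef
  set ξ : Fin n → ℝ := fun i => t i.castSucc with hξdef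
  have ht0 : t 0 = a := by rw [htdef]; norm_num
  have htl : t (Fin.last n) = b := by
    rw [htdef]
    show a + ((Fin.last n : ℕ) : ℝ) * h = b
    rw [Fin.val_last, hhdef]
    field_simp
    ring
  have htm : Monotone t := by
    intro i j hij
    simp only [htdef]
    have : (i : ℝ) ≤ (j : ℝ) := by exact_mod_cast hij
    nlinarith
  have hdiff : ∀ i : Fin n, t i.succ - t i.castSucc = h := by
    intro i
    simp only [htdef, Fin.val_succ, Fin.coe_castSucc]
    push_cast
    ring
  have hmesh : ∀ i : Fin n, t i.castSucc ≤ ξ i ∧ ξ i ≤ t i.succ := by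
    intro i
    refine ⟨le_refl _, ?_⟩
    have := hdiff i
    simp only [hξdef]
    linarith
  have hmesh₁ : ∀ i : Fin n, t i.castSucc ≤ ξ i ∧ ξ i ≤ t i.succ ∧ t i.succ - t i.castSucc < δ₁ := by
    intro i
    exact ⟨(hmesh i).1, (hmesh i).2, by rw [hdiff i]; exact lt_of_lt_of_le hhδ (min_le_left _ _)⟩
  have hmesh₂ : ∀ i : Fin n, t i.castSucc ≤ ξ i ∧ ξ i ≤ t i.succ ∧ t i.succ - t i.castSucc < δ₂ := by
    intro i
    exact ⟨(hmesh i).1, (hmesh i).2, by rw [hdiff i]; exact lt_of_lt_of_le hhδ (min_le_right _ _)⟩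
  have e₁ := h₁ n t ξ ht0 htl htm hmesh₁
  have e₂ := h₂ n t ξ ht0 htl htm hmesh₂
  set SI : ℝ := ∑ i : Fin n, f (ξ i) * l (ξ i) * (u (t i.succ) - u (t i.castSucc)) with hSIdef
  set SJ : ℝ := ∑ i : Fin n, l (ξ i) * (u (t i.succ) - u (t i.castSucc)) with hSJdef
  have e₁' : |SI - I| < ε / 2 := e₁
  have e₂' : |SJ| < ε / (2 * (|c| + 1)) := by
    simpa using e₂
  have hkey := key n t ξ ht0 htl htm hmesh
  have hsplit : ∑ i : Fin n, (f (ξ i) - c) * l (ξ i) * (u (t i.succ) - u (t i.castSucc)) =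
      SI - c * SJ := by
    rw [hSIdef, hSJdef, Finset.mul_sum, ← Finset.sum_sub_distrib]
    apply Finset.sum_congr rfl
    intro i _
    ring
  rw [hsplit] at hkey
  have hc2 : |c| * (ε / (2 * (|c| + 1))) ≤ ε / 2 := by
    have h0 := abs_nonneg c
    have heq2 : (|c| + 1) * (ε / (2 * (|c| + 1))) = ε / 2 := by
      have hne : |c| + 1 ≠ 0 := by linarith
      field_simp
    calc |c| * (ε / (2 * (|c| + 1))) ≤ (|c| + 1) * (ε / (2 * (|c| + 1))) :=
          mul_le_mul_of_nonneg_right (by linarith) (div_pos hε hc1).le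
      _ = ε / 2 := heq2
  calc |I| = |(I - SI) + (SI - c * SJ) + c * SJ| := by ring_nf
    _ ≤ |(I - SI) + (SI - c * SJ)| + |c * SJ| := abs_add_le _ _
    _ ≤ |I - SI| + |SI - c * SJ| + |c * SJ| := by
        have := abs_add_le (I - SI) (SI - c * SJ)
        linarith
    _ ≤ ε / 2 + (M - m) / 2 * L * V + |c| * |SJ| := by
        rw [abs_mul]
        have : |I - SI| = |SI - I| := abs_sub_comm _ _
        have h3 := e₁'
        rw [abs_sub_comm] at h3
        linarith [hkey]
    _ ≤ ε / 2 + (M - m) / 2 * L * V + ε / 2 := by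
        have : |c| * |SJ| ≤ |c| * (ε / (2 * (|c| + 1))) :=
          mul_le_mul_of_nonneg_left e₂'.le (abs_nonneg _)
        linarith [hc2]
    _ = 1 / 2 * (M - m) * L * V + ε := by ring
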